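/- Let H be any subgroup of T(d,ℝ)_+ and let G = ℝ^d ⋊ H be the semidirect product with multiplication (b_1,h_1)(b_2,h_2) = (b_1 + h_1 b_2, h_1 h_2). Then the map φ : G → Sp(d,ℝ) defined by φ(b,h) = g(σ_b, ρ(h)) is an injective group homomorphism; in particular, G is isomorphic to the subgroup {g(σ_b, ρ(h)) : b ∈ ℝ^d, h ∈ H} of Sp(d,ℝ). -/

import Mathlib

/-!
Write `σ_b = ½ (b e₁ᵀ + e₁ bᵀ)`. An upper triangular `h` maps `e₁` to `h₁₁ e₁`, so
`h σ_b hᵀ = h₁₁ σ_{hb}`; the factor `√h₁₁` in `ρ` cancels `h₁₁`, giving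
`σ_{hb} = ρ(h)^{-T} σ_b ρ(h)^{-1}`. Combined with the block identity
`g(σ₁,h₁) g(σ₂,h₂) = g(σ₁ + h₁^{-T} σ₂ h₁^{-1}, h₁h₂)` and the multiplicativity of `ρ`
(the `(1,1)` entry is multiplicative on upper triangular matrices), this makes `φ` a
homomorphism. Each `g(σ,h)` with `σ` symmetric is symplectic, and `φ` is injective since
its blocks recover `σ_b` and `ρ(h)`, while `ρ(h)^{-1} = hᵀ / √h₁₁` recovers `√h₁₁` as its
`(1,1)` entry.
-/

open Matrix

noncomputable section

/-- The symmetric matrix `σ_b` with `(σ_b)_{1,1} = b_1`,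
`(σ_b)_{1,j} = (σ_b)_{j,1} = b_j/2` for `j ≥ 2`, and all other entries zero. -/
def sigmaMat (d : ℕ) [NeZero d] (b : Fin d → ℝ) : Matrix (Fin d) (Fin d) ℝ :=
  Matrix.of fun i j =>
    if i = 0 ∧ j = 0 then b 0
    else if i = 0 then b j / 2
    else if j = 0 then b i / 2
    else 0

/-- `T(d,ℝ)_+`: invertible upper triangular matrices with positive `(1,1)` entry. -/
def Tplus (d : ℕ) [NeZero d] : Set (Matrix (Fin d) (Fin d) ℝ) :=
  {h | IsUnit h ∧ 0 < h 0 0 ∧ ∀ i j : Fin d, j < i → h i j = 0}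

/-- The map `ρ(h) = √(h_{1,1}) · h^{-T}`. -/
def rhoMap (d : ℕ) [NeZero d] (h : Matrix (Fin d) (Fin d) ℝ) : Matrix (Fin d) (Fin d) ℝ :=
  Real.sqrt (h 0 0) • (h⁻¹)ᵀ

/-- The standard symplectic form matrix `J = [[0, I_d], [-I_d, 0]]`. -/
def Jmat (d : ℕ) : Matrix (Fin d ⊕ Fin d) (Fin d ⊕ Fin d) ℝ :=
  Matrix.fromBlocks 0 1 (-1) 0

/-- The block matrix `g(σ,h) = [[h, 0], [σh, h^{-T}]]`. -/
def gBlock (d : ℕ) (σ h : Matrix (Fin d) (Fin d) ℝ) :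
    Matrix (Fin d ⊕ Fin d) (Fin d ⊕ Fin d) ℝ :=
  Matrix.fromBlocks h 0 (σ * h) (h⁻¹)ᵀ

/-- The map `φ(b,h) = g(σ_b, ρ(h))`. -/
def phiMap (d : ℕ) [NeZero d] (b : Fin d → ℝ) (h : Matrix (Fin d) (Fin d) ℝ) :
    Matrix (Fin d ⊕ Fin d) (Fin d ⊕ Fin d) ℝ :=
  gBlock d (sigmaMat d b) (rhoMap d h)

namespace Matrix.IsUpperTriangular

variable {d : ℕ} [NeZero d] {R : Type*} [CommSemiring R] {h : Matrix (Fin d) (Fin d) R}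

theorem mulVec_single_zero (hh : h.IsUpperTriangular) (c : R) :
    h *ᵥ Pi.single 0 c = h 0 0 • Pi.single 0 c := by
  funext i
  rcases eq_or_ne i 0 with rfl | hi
  · simp [mul_comm]
  · simp [hi, hh (show id 0 < id i from Fin.pos_iff_ne_zero.mpr hi)]

theorem mul_apply_zero_zero (g : Matrix (Fin d) (Fin d) R) (hh : h.IsUpperTriangular) :
    (g * h) 0 0 = g 0 0 * h 0 0 := by
  rw [mul_apply, Finset.sum_eq_single 0 (fun k _ hk => ?_) (by simp)]
  rw [hh (show id 0 < id k from Fin.pos_iff_ne_zero.mpr hk), mul_zero]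

end Matrix.IsUpperTriangular

section

variable {d : ℕ} [NeZero d]

theorem isUpperTriangular_of_mem_Tplus {h : Matrix (Fin d) (Fin d) ℝ} (hh : h ∈ Tplus d) :
    h.IsUpperTriangular :=
  fun i j hij => hh.2.2 i j hij

theorem sigmaMat_eq_smul_vecMulVec (b : Fin d → ℝ) :
    sigmaMat d b = (1 / 2 : ℝ) •
      (vecMulVec b (Pi.single 0 1) + vecMulVec (Pi.single 0 1) b) := by
  ext i j
  rcases eq_or_ne i 0 with rfl | hi <;> rcases eq_or_ne j 0 with rfl | hj <;>
    simp [sigmaMat, vecMulVec_apply, *] <;> ring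

theorem sigmaMat_transpose (b : Fin d → ℝ) : (sigmaMat d b)ᵀ = sigmaMat d b := by
  rw [sigmaMat_eq_smul_vecMulVec, transpose_smul, transpose_add, transpose_vecMulVec,
    transpose_vecMulVec, add_comm]

theorem sigmaMat_add (b₁ b₂ : Fin d → ℝ) :
    sigmaMat d (b₁ + b₂) = sigmaMat d b₁ + sigmaMat d b₂ := by
  simp only [sigmaMat_eq_smul_vecMulVec, add_vecMulVec, vecMulVec_add]
  module

theorem sigmaMat_injective : Function.Injective (sigmaMat d) := by
  intro b b' hbb'
  funext i
  have hi := congrFun (congrFun hbb' 0) i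
  rcases eq_or_ne i 0 with rfl | hi0
  · simpa [sigmaMat] using hi
  · simpa [sigmaMat, hi0] using hi

theorem mul_sigmaMat_mul_transpose {h : Matrix (Fin d) (Fin d) ℝ} (hh : h.IsUpperTriangular)
    (b : Fin d → ℝ) : h * sigmaMat d b * hᵀ = h 0 0 • sigmaMat d (h *ᵥ b) := by
  rw [sigmaMat_eq_smul_vecMulVec, sigmaMat_eq_smul_vecMulVec, mul_smul_comm, smul_mul_assoc,
    mul_add, add_mul, mul_vecMulVec, mul_vecMulVec, vecMulVec_mul, vecMulVec_mul,
    vecMul_transpose, vecMul_transpose, hh.mulVec_single_zero,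
    smul_vecMulVec, vecMulVec_smul]
  module

theorem rhoMap_mul_smul_transpose {h : Matrix (Fin d) (Fin d) ℝ} (hu : IsUnit h)
    (hpos : 0 < h 0 0) : rhoMap d h * ((√(h 0 0))⁻¹ • hᵀ) = 1 := by
  rw [rhoMap, smul_mul_assoc, mul_smul_comm, smul_smul, ← transpose_mul,
    mul_nonsing_inv _ ((isUnit_iff_isUnit_det h).mp hu), transpose_one,
    mul_inv_cancel₀ (Real.sqrt_pos.mpr hpos).ne', one_smul]

theorem inv_rhoMap {h : Matrix (Fin d) (Fin d) ℝ} (hu : IsUnit h) (hpos : 0 < h 0 0) :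
    (rhoMap d h)⁻¹ = (√(h 0 0))⁻¹ • hᵀ :=
  inv_eq_right_inv (rhoMap_mul_smul_transpose hu hpos)

theorem isUnit_det_rhoMap {h : Matrix (Fin d) (Fin d) ℝ} (hu : IsUnit h) (hpos : 0 < h 0 0) :
    IsUnit (rhoMap d h).det :=
  isUnit_det_of_right_inverse (rhoMap_mul_smul_transpose hu hpos)

theorem rhoMap_mul {g h : Matrix (Fin d) (Fin d) ℝ} (hg : 0 < g 0 0) (hh : h.IsUpperTriangular) :
    rhoMap d (g * h) = rhoMap d g * rhoMap d h := by
  rw [rhoMap, rhoMap, rhoMap, hh.mul_apply_zero_zero, Real.sqrt_mul hg.le, Matrix.mul_inv_rev,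
    transpose_mul, smul_mul_smul_comm]

theorem rhoMap_injOn : Set.InjOn (rhoMap d) {h | IsUnit h ∧ 0 < h 0 0} := by
  rintro g ⟨hgu, hg⟩ h ⟨hhu, hh⟩ hgh
  have hinv : (√(g 0 0))⁻¹ • gᵀ = (√(h 0 0))⁻¹ • hᵀ := by
    rw [← inv_rhoMap hgu hg, ← inv_rhoMap hhu hh, hgh]
  have hsqrt : √(g 0 0) = √(h 0 0) := by
    have h00 := congrFun (congrFun hinv 0) 0
    simp only [Matrix.smul_apply, transpose_apply, smul_eq_mul] at h00
    rwa [inv_mul_eq_div, inv_mul_eq_div, Real.div_sqrt, Real.div_sqrt] at h00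
  rw [hsqrt] at hinv
  exact transpose_injective (smul_right_injective _ (inv_ne_zero (Real.sqrt_pos.mpr hh).ne') hinv)

theorem sigmaMat_mulVec {h : Matrix (Fin d) (Fin d) ℝ} (hu : IsUnit h) (hpos : 0 < h 0 0)
    (hh : h.IsUpperTriangular) (b : Fin d → ℝ) :
    sigmaMat d (h *ᵥ b) = ((rhoMap d h)⁻¹)ᵀ * sigmaMat d b * (rhoMap d h)⁻¹ := by
  rw [inv_rhoMap hu hpos, transpose_smul, transpose_transpose, mul_smul_comm, smul_mul_assoc,
    smul_mul_assoc, smul_smul, mul_sigmaMat_mul_transpose hh, smul_smul, ← mul_inv,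
    Real.mul_self_sqrt hpos.le, inv_mul_cancel₀ hpos.ne', one_smul]

end

section

variable {d : ℕ}

theorem gBlock_mul {σ₁ σ₂ h₁ h₂ : Matrix (Fin d) (Fin d) ℝ} (hu : IsUnit h₁.det) :
    gBlock d σ₁ h₁ * gBlock d σ₂ h₂ = gBlock d (σ₁ + (h₁⁻¹)ᵀ * σ₂ * h₁⁻¹) (h₁ * h₂) := by
  simp only [gBlock, fromBlocks_multiply, Matrix.mul_zero, Matrix.zero_mul, add_zero, zero_add,
    Matrix.mul_inv_rev, transpose_mul]
  congr 1
  rw [add_mul, Matrix.mul_assoc, Matrix.mul_assoc, ← Matrix.mul_assoc h₁⁻¹,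
    nonsing_inv_mul _ hu, Matrix.one_mul, Matrix.mul_assoc]

theorem gBlock_injective {σ σ' h h' : Matrix (Fin d) (Fin d) ℝ} (hu : IsUnit h.det)
    (heq : gBlock d σ h = gBlock d σ' h') : σ = σ' ∧ h = h' := by
  obtain ⟨rfl, -, hσ, -⟩ := fromBlocks_inj.mp heq
  exact ⟨((isUnit_iff_isUnit_det h).mpr hu).mul_right_cancel hσ, rfl⟩

theorem gBlock_transpose_mul_Jmat_mul {σ h : Matrix (Fin d) (Fin d) ℝ} (hσ : σᵀ = σ)
    (hu : IsUnit h.det) : (gBlock d σ h)ᵀ * Jmat d * gBlock d σ h = Jmat d := by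
  have hsymm : (σ * h)ᵀ * h = hᵀ * (σ * h) := by rw [transpose_mul, hσ, Matrix.mul_assoc]
  simp only [gBlock, Jmat, fromBlocks_transpose, fromBlocks_multiply, transpose_transpose,
    transpose_zero, Matrix.mul_zero, Matrix.zero_mul, Matrix.mul_one, Matrix.mul_neg,
    Matrix.neg_mul, add_zero, zero_add, ← transpose_mul, nonsing_inv_mul _ hu, transpose_one,
    hsymm, neg_add_cancel]

end

theorem statement15_general (d : ℕ) [NeZero d]
    (H : Set (Matrix (Fin d) (Fin d) ℝ))
    (hHsub : H ⊆ Tplus d) :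
    (∀ (b₁ b₂ : Fin d → ℝ), ∀ h₁ ∈ H, ∀ h₂ ∈ H,
      phiMap d (b₁ + h₁.mulVec b₂) (h₁ * h₂) = phiMap d b₁ h₁ * phiMap d b₂ h₂) ∧
    (∀ (b b' : Fin d → ℝ), ∀ h ∈ H, ∀ h' ∈ H,
      phiMap d b h = phiMap d b' h' → b = b' ∧ h = h') ∧
    (∀ (b : Fin d → ℝ), ∀ h ∈ H,
      (phiMap d b h)ᵀ * Jmat d * phiMap d b h = Jmat d) := by
  have hdet : ∀ h ∈ H, IsUnit (rhoMap d h).det := fun h hh =>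
    isUnit_det_rhoMap (hHsub hh).1 (hHsub hh).2.1
  refine ⟨?_, ?_, ?_⟩
  · intro b₁ b₂ h₁ hh₁ h₂ hh₂
    obtain ⟨hu₁, hpos₁, -⟩ := hHsub hh₁
    rw [phiMap, phiMap, phiMap, gBlock_mul (hdet h₁ hh₁), sigmaMat_add,
      sigmaMat_mulVec hu₁ hpos₁ (isUpperTriangular_of_mem_Tplus (hHsub hh₁)),
      rhoMap_mul hpos₁ (isUpperTriangular_of_mem_Tplus (hHsub hh₂))]
  · intro b b' h hh h' hh' heq
    obtain ⟨hσ, hρ⟩ := gBlock_injective (hdet h hh) heq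
    exact ⟨sigmaMat_injective hσ,
      rhoMap_injOn ⟨(hHsub hh).1, (hHsub hh).2.1⟩ ⟨(hHsub hh').1, (hHsub hh').2.1⟩ hρ⟩
  · intro b h hh
    exact gBlock_transpose_mul_Jmat_mul (sigmaMat_transpose b) (hdet h hh)

/-- Let `H` be a subgroup of `T(d,ℝ)_+` and `G = ℝ^d ⋊ H` with
multiplication `(b₁,h₁)(b₂,h₂) = (b₁ + h₁b₂, h₁h₂)`.  Then `φ(b,h) = g(σ_b, ρ(h))` is an
injective group homomorphism of `G` into `Sp(d,ℝ)`; in particular `G` is isomorphic to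
the subgroup `{g(σ_b, ρ(h)) : b ∈ ℝ^d, h ∈ H}` of `Sp(d,ℝ)`. -/
theorem statement15 (d : ℕ) [NeZero d]
    (H : Set (Matrix (Fin d) (Fin d) ℝ))
    (hHsub : H ⊆ Tplus d)
    (hHone : (1 : Matrix (Fin d) (Fin d) ℝ) ∈ H)
    (hHmul : ∀ h₁ ∈ H, ∀ h₂ ∈ H, h₁ * h₂ ∈ H)
    (hHinv : ∀ h ∈ H, h⁻¹ ∈ H) :
    (∀ (b₁ b₂ : Fin d → ℝ), ∀ h₁ ∈ H, ∀ h₂ ∈ H,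
      phiMap d (b₁ + h₁.mulVec b₂) (h₁ * h₂) = phiMap d b₁ h₁ * phiMap d b₂ h₂) ∧
    (∀ (b b' : Fin d → ℝ), ∀ h ∈ H, ∀ h' ∈ H,
      phiMap d b h = phiMap d b' h' → b = b' ∧ h = h') ∧
    (∀ (b : Fin d → ℝ), ∀ h ∈ H,
      (phiMap d b h)ᵀ * Jmat d * phiMap d b h = Jmat d) :=
  statement15_general d H hHsub

end
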